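/- For an algebra map f : F → k, let f(x) = Σ_{n≥1} f(u_n) x^n/n! be the associated exponential formal power series with zero constant term. Then for all algebra maps f, g : F → k, the composite series satisfies f(g(x)) = (g⋆f)(x), where ⋆ is the convolution product (f⋆g)(u_n) = Σ f(u_n⟨1⟩) g(u_n⟨2⟩) with δ u_n = Σ u_n⟨1⟩ ⊗ u_n⟨2⟩; equivalently, for every n ≥ 1 the coefficient of x^n/n! in f(g(x)) equals Σ_{π∈Π_n} (∏_{B∈π} g(u_{|B|})) f(u_{ℓ(π)}). Hence the monoid of algebra maps F → k under convolution is antiisomorphic to the monoid of exponential formal power series with zero constant term under composition. -/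

import Mathlib

/-!
Write `a n = f(u_n)` and `b n = g(u_n)`, and let `A`, `G` be the exponential generating functions
of `a` and `b`. The coefficient of `x^n/n!` in `A(G(x))` is `∑_π (∏_{B ∈ π} b_{|B|}) a_{ℓ(π)}`:
both sides equal `a 0` on the empty set, and both obey the same recursion when a point `x` is
added to the ground set. Combinatorially, a partition of `insert x s` is the block `insert x t`
containing `x` together with a partition of `s \ t`; analytically, the chain rule
`(A ∘ G)' = (A' ∘ G) · G'` and the binomial convolution of exponential coefficients give the same
sum over `t ⊆ s` grouped by `#t`. Evaluating `δ u_n` under `g ⊗ f` produces exactly this sum.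
-/

open scoped TensorProduct

noncomputable section

/-- Each block of a finite partition is nonempty. -/
lemma partCardPos {n : ℕ} (P : Finpartition (Finset.univ : Finset (Fin n)))
    {b : Finset (Fin n)} (hb : b ∈ P.parts) : 0 < b.card :=
  Finset.card_pos.mpr (P.nonempty_of_mem_parts hb)

/-- A partition of a nonempty set has at least one block. -/
lemma partsCardPos {n : ℕ} (hn : 0 < n)
    (P : Finpartition (Finset.univ : Finset (Fin n))) : 0 < P.parts.card := by
  refine Finset.card_pos.mpr (P.parts_nonempty ?_)
  have h : (Finset.univ : Finset (Fin n)).Nonempty := ⟨⟨0, hn⟩, Finset.mem_univ _⟩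
  simpa [Finset.bot_eq_empty, ← Finset.nonempty_iff_ne_empty] using h

/-- The Faà di Bruno bialgebra `F = k[u_1, u_2, …]` (as an algebra). -/
abbrev FaaF (k : Type*) [Field k] : Type _ := MvPolynomial ℕ+ k

/-- The Faà di Bruno coproduct: the algebra map with
`δ u_n = Σ_{π ∈ Π_n} u_π ⊗ u_{ℓ(π)}`. -/
def deltaF (k : Type*) [Field k] : FaaF k →ₐ[k] FaaF k ⊗[k] FaaF k :=
  MvPolynomial.aeval (fun n : ℕ+ =>
    ∑ P : Finpartition (Finset.univ : Finset (Fin (n : ℕ))),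
      (∏ b ∈ P.parts.attach,
        (MvPolynomial.X (⟨b.1.card, partCardPos P b.2⟩ : ℕ+) : FaaF k)) ⊗ₜ[k]
      (MvPolynomial.X (⟨P.parts.card, partsCardPos n.2 P⟩ : ℕ+) : FaaF k))

/-- The Faà di Bruno counit `ε(u_n) = δ_{n,1}`. -/
def epsF (k : Type*) [Field k] : FaaF k →ₐ[k] k :=
  MvPolynomial.aeval (fun n : ℕ+ => if (n : ℕ) = 1 then (1 : k) else 0)

/-- The exponential formal power series `f(x) = Σ_{n ≥ 1} f(u_n) x^n/n!` associated to an
algebra map `f : F → k`. -/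
def serF {k : Type*} [Field k] (f : FaaF k →ₐ[k] k) : PowerSeries k :=
  PowerSeries.mk fun n => if h : 0 < n then f (MvPolynomial.X ⟨n, h⟩) / n.factorial else 0

/-- Substitution `f(g(x))` of a power series `g` with zero constant term into `f`:
the coefficient of `x^m` is `Σ_{j ≤ m} (coeff_j f)·(coeff_m g^j)`. -/
def compPS {k : Type*} [Field k] (f g : PowerSeries k) : PowerSeries k :=
  PowerSeries.mk fun m =>
    ∑ j ∈ Finset.range (m + 1), PowerSeries.coeff j f * PowerSeries.coeff m (g ^ j)

/-- The convolution product `(f ⋆ g)(p) = Σ f(p⟨1⟩) g(p⟨2⟩)` on maps `F → k`. -/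
def convF {k : Type*} [Field k] (f g : FaaF k →ₐ[k] k) : FaaF k →ₗ[k] k :=
  (TensorProduct.lid k k).toLinearMap ∘ₗ
    TensorProduct.map f.toLinearMap g.toLinearMap ∘ₗ (deltaF k).toLinearMap

open scoped Nat
open Finset PowerSeries

namespace Finset

variable {α : Type*} [DecidableEq α] {s t : Finset α} {x : α}

theorem disjoint_sdiff_insert (hx : x ∉ s) : Disjoint (s \ t) (insert x t) :=
  disjoint_insert_right.2 ⟨fun h => hx (mem_sdiff.1 h).1, sdiff_disjoint⟩

theorem sdiff_union_insert (ht : t ⊆ s) : s \ t ∪ insert x t = insert x s := by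
  rw [union_insert, sdiff_union_of_subset ht]

end Finset

namespace Finpartition

section Lattice

variable {α : Type*} [Lattice α] [OrderBot α] [IsModularLattice α] [DecidableEq α] {a b c : α}

theorem prod_extend_parts {M : Type*} [CommMonoid M] (P : Finpartition a) (hb : b ≠ ⊥)
    (hab : Disjoint a b) (hc : a ⊔ b = c) (w : α → M) :
    ∏ p ∈ (P.extend hb hab hc).parts, w p = w b * ∏ p ∈ P.parts, w p :=
  prod_insert fun h => hb <| hab.symm.eq_bot_of_le <| P.le h

end Lattice

theorem parts_avoid_of_mem {α : Type*} [GeneralizedBooleanAlgebra α] [DecidableEq α] {a b : α}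
    (P : Finpartition a) (hb : b ∈ P.parts) : (P.avoid b).parts = P.parts.erase b := by
  ext c
  rw [mem_avoid, mem_erase]
  constructor
  · rintro ⟨d, hd, hdb, rfl⟩
    have hne : d ≠ b := by rintro rfl; exact hdb le_rfl
    have hdisj : Disjoint d b := P.disjoint hd hb hne
    rw [hdisj.sdiff_eq_left]
    exact ⟨hne, hd⟩
  · rintro ⟨hcb, hc⟩
    have hdisj : Disjoint c b := P.disjoint hc hb hcb
    exact ⟨c, hc, fun hle => P.ne_bot hc (hdisj.eq_bot_of_le hle), hdisj.sdiff_eq_left⟩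

variable {α : Type*} [DecidableEq α] {s t : Finset α} {x : α}

theorem sum_filter_part_eq_sum_extend {M : Type*} [AddCommMonoid M] (hx : x ∉ s) (ht : t ⊆ s)
    (F : Finpartition (insert x s) → M) :
    ∑ P with (P.part x).erase x = t, F P =
      ∑ Q : Finpartition (s \ t),
        F (Q.extend (insert_ne_empty x t) (disjoint_sdiff_insert hx) (sdiff_union_insert ht)) := by
  have hrest : insert x s \ insert x t = s \ t := by
    rw [insert_sdiff_insert, sdiff_insert_of_notMem hx]
  have hextend_avoid : ∀ P ∈ ({P | (P.part x).erase x = t} : Finset (Finpartition _)),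
      ((P.avoid (insert x t)).copy hrest).extend (insert_ne_empty x t)
        (disjoint_sdiff_insert hx) (sdiff_union_insert ht) = P := by
    intro P hP
    have hpart : P.part x = insert x t := by
      rw [← (mem_filter.1 hP).2, insert_erase (P.mem_part_self.2 (mem_insert_self x s))]
    have hmem : insert x t ∈ P.parts := hpart ▸ P.part_mem.2 (mem_insert_self x s)
    ext1
    rw [extend_parts, copy_parts, parts_avoid_of_mem P hmem, insert_erase hmem]
  refine sum_nbij' (fun P => (P.avoid (insert x t)).copy hrest)
    (fun Q => Q.extend (insert_ne_empty x t) (disjoint_sdiff_insert hx) (sdiff_union_insert ht))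
    (fun _ _ => mem_univ _) (fun Q _ => ?_) hextend_avoid (fun Q _ => ?_)
    (fun P hP => congrArg F (hextend_avoid P hP).symm)
  · rw [mem_filter, part_eq_of_mem _ (mem_insert_self _ _) (mem_insert_self x t),
      erase_insert fun h => hx (ht h)]
    exact ⟨mem_univ _, rfl⟩
  · have hnotmem : insert x t ∉ Q.parts := fun h =>
      hx (mem_sdiff.1 (Q.le h (mem_insert_self x t))).1
    ext1
    rw [copy_parts, parts_avoid_of_mem _ (mem_insert_self _ _), extend_parts,
      erase_insert hnotmem]

end Finpartition

section PartitionSum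

variable {α R : Type*} [DecidableEq α] [CommSemiring R]

def partitionSum (b a : ℕ → R) (s : Finset α) : R :=
  ∑ P : Finpartition s, (∏ B ∈ P.parts, b #B) * a #P.parts

theorem partitionSum_empty (b a : ℕ → R) : partitionSum b a (∅ : Finset α) = a 0 := by
  have : Unique (Finpartition (∅ : Finset α)) := inferInstanceAs (Unique (Finpartition ⊥))
  rw [partitionSum, Fintype.sum_unique, Finpartition.parts_eq_empty_iff.2 rfl, prod_empty,
    card_empty, one_mul]

theorem partitionSum_insert (b a : ℕ → R) {s : Finset α} {x : α} (hx : x ∉ s) :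
    partitionSum b a (insert x s) =
      ∑ t ∈ s.powerset, b (#t + 1) * partitionSum b (fun j => a (j + 1)) (s \ t) := by
  rw [partitionSum, ← sum_fiberwise_of_maps_to (g := fun P => (P.part x).erase x)
    fun P _ => mem_powerset.2 (subset_insert_iff.1 (P.part_subset x))]
  refine sum_congr rfl fun t ht => ?_
  have hxt : x ∉ t := fun h => hx (mem_powerset.1 ht h)
  rw [Finpartition.sum_filter_part_eq_sum_extend hx (mem_powerset.1 ht), partitionSum, mul_sum]
  refine sum_congr rfl fun Q _ => ?_
  rw [Finpartition.prod_extend_parts, Finpartition.card_extend, card_insert_of_notMem hxt]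
  ring

end PartitionSum

namespace PowerSeries

section CommSemiring

variable {R : Type*} [CommSemiring R]

theorem coeff_pow_eq_zero_of_lt {G : R⟦X⟧} (hG : constantCoeff G = 0) {n d : ℕ} (h : n < d) :
    coeff n (G ^ d) = 0 :=
  X_pow_dvd_iff.1 (pow_dvd_pow_of_dvd (X_dvd_iff.2 hG) d) n h

theorem factorial_mul_coeff_mul (F G : R⟦X⟧) (n : ℕ) :
    n ! * coeff n (F * G) =
      ∑ m ∈ range (n + 1), n.choose m * (m ! * coeff m F) * ((n - m)! * coeff (n - m) G) := by
  rw [coeff_mul, Nat.sum_antidiagonal_eq_sum_range_succ_mk, mul_sum]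
  refine sum_congr rfl fun m hm => ?_
  rw [← Nat.choose_mul_factorial_mul_factorial (Nat.lt_succ_iff.1 (mem_range.1 hm))]
  push_cast
  ring

theorem factorial_mul_coeff_succ (F : R⟦X⟧) (n : ℕ) :
    (n + 1)! * coeff (n + 1) F = n ! * coeff n (d⁄dX R F) := by
  rw [coeff_derivative, Nat.factorial_succ]
  push_cast
  ring

end CommSemiring

variable {k : Type*} [Field k] [CharZero k]

def egf (a : ℕ → k) : k⟦X⟧ := mk fun n => a n / n !

theorem factorial_mul_coeff_egf (a : ℕ → k) (n : ℕ) : n ! * coeff n (egf a) = a n := by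
  rw [egf, coeff_mk, mul_div_cancel₀ _ (Nat.cast_ne_zero.2 n.factorial_ne_zero)]

theorem constantCoeff_egf (a : ℕ → k) : constantCoeff (egf a) = a 0 := by
  simpa using factorial_mul_coeff_egf a 0

theorem derivative_egf (a : ℕ → k) : d⁄dX k (egf a) = egf fun n => a (n + 1) := by
  ext n
  rw [coeff_derivative, egf, egf, coeff_mk, coeff_mk, Nat.factorial_succ]
  push_cast
  field_simp

theorem factorial_mul_coeff_succ_subst_egf {b : ℕ → k} (hb : b 0 = 0) (a : ℕ → k) (n : ℕ) :
    (n + 1)! * coeff (n + 1) ((egf a).subst (egf b)) =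
      ∑ m ∈ range (n + 1), n.choose m * b (m + 1) *
        ((n - m)! * coeff (n - m) ((egf fun j => a (j + 1)).subst (egf b))) := by
  have hsubst : HasSubst (egf b) :=
    HasSubst.of_constantCoeff_zero' (by rw [constantCoeff_egf, hb])
  rw [factorial_mul_coeff_succ, derivative_subst hsubst, mul_comm _ (d⁄dX k (egf b)),
    factorial_mul_coeff_mul, derivative_egf, derivative_egf]
  simp only [factorial_mul_coeff_egf]

end PowerSeries

theorem compPS_eq_subst {k : Type*} [Field k] (F : k⟦X⟧) {G : k⟦X⟧}
    (hG : constantCoeff G = 0) : compPS F G = F.subst G := by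
  ext m
  rw [compPS, coeff_mk, coeff_subst' (HasSubst.of_constantCoeff_zero' hG)]
  refine (finsum_eq_sum_of_support_subset _ fun d hd => ?_).symm
  by_contra hdm
  rw [coe_range, Set.mem_Iio, not_lt] at hdm
  exact hd (by simp only [coeff_pow_eq_zero_of_lt hG hdm, mul_zero])

theorem partitionSum_eq_factorial_mul_coeff_subst_egf {α k : Type*} [DecidableEq α] [Field k]
    [CharZero k] {b : ℕ → k} (hb : b 0 = 0) (a : ℕ → k) (s : Finset α) :
    partitionSum b a s = (#s)! * coeff #s ((egf a).subst (egf b)) := by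
  induction s using Finset.strongInduction generalizing a with
  | H s ih =>
  rcases s.eq_empty_or_nonempty with rfl | ⟨x, hx⟩
  · rw [partitionSum_empty, card_empty,
      ← compPS_eq_subst _ (by rw [constantCoeff_egf, hb])]
    simp [compPS, egf]
  set r := s.erase x
  have hxr : x ∉ r := notMem_erase x s
  have hrest : ∀ t ∈ r.powerset, b (#t + 1) * partitionSum b (fun j => a (j + 1)) (r \ t) =
      b (#t + 1) * ((#r - #t)! * coeff (#r - #t) ((egf fun j => a (j + 1)).subst (egf b))) := by
    intro t ht
    rw [ih _ (sdiff_subset.trans_ssubset (erase_ssubset hx)),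
      card_sdiff_of_subset (mem_powerset.1 ht)]
  rw [← insert_erase hx, partitionSum_insert b a hxr, card_insert_of_notMem hxr,
    PowerSeries.factorial_mul_coeff_succ_subst_egf hb, sum_congr rfl hrest,
    sum_powerset_apply_card (fun m => b (m + 1) *
      ((#r - m)! * coeff (#r - m) ((egf fun j => a (j + 1)).subst (egf b))))]
  simp only [nsmul_eq_mul, mul_assoc]

section FaaDiBruno

variable {k : Type*} [Field k]

def valueSeq (f : FaaF k →ₐ[k] k) (n : ℕ) : k :=
  if h : 0 < n then f (MvPolynomial.X ⟨n, h⟩) else 0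

theorem valueSeq_zero (f : FaaF k →ₐ[k] k) : valueSeq f 0 = 0 :=
  dif_neg (lt_irrefl 0)

theorem serF_eq_egf (f : FaaF k →ₐ[k] k) : serF f = egf (valueSeq f) := by
  ext n
  rw [serF, egf, coeff_mk, coeff_mk, valueSeq]
  split_ifs <;> simp

theorem partitionSum_valueSeq (f g : FaaF k →ₐ[k] k) {n : ℕ} (hn : 0 < n) :
    partitionSum (valueSeq g) (valueSeq f) (univ : Finset (Fin n)) =
      ∑ P : Finpartition (univ : Finset (Fin n)),
        (∏ b ∈ P.parts.attach, g (MvPolynomial.X (⟨b.1.card, partCardPos P b.2⟩ : ℕ+))) *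
          f (MvPolynomial.X (⟨P.parts.card, partsCardPos hn P⟩ : ℕ+)) := by
  refine sum_congr rfl fun P _ => ?_
  rw [← prod_attach, valueSeq, dif_pos (partsCardPos hn P)]
  exact congrArg (· * _) (prod_congr rfl fun b _ => dif_pos (partCardPos P b.2))

theorem convF_X (f g : FaaF k →ₐ[k] k) (n : ℕ+) :
    convF f g (MvPolynomial.X n) =
      ∑ P : Finpartition (univ : Finset (Fin n)),
        (∏ b ∈ P.parts.attach, f (MvPolynomial.X (⟨b.1.card, partCardPos P b.2⟩ : ℕ+))) *
          g (MvPolynomial.X (⟨P.parts.card, partsCardPos n.2 P⟩ : ℕ+)) := by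
  simp only [convF, LinearMap.coe_comp, Function.comp_apply, AlgHom.toLinearMap_apply,
    LinearEquiv.coe_coe, deltaF, MvPolynomial.aeval_X, map_sum, TensorProduct.map_tmul,
    TensorProduct.lid_tmul, smul_eq_mul, map_prod]

theorem factorial_mul_coeff_compPS_serF [CharZero k] (f g : FaaF k →ₐ[k] k) {n : ℕ}
    (hn : 0 < n) :
    (n ! : k) * coeff n (compPS (serF f) (serF g)) =
      ∑ P : Finpartition (univ : Finset (Fin n)),
        (∏ b ∈ P.parts.attach, g (MvPolynomial.X (⟨b.1.card, partCardPos P b.2⟩ : ℕ+))) *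
          f (MvPolynomial.X (⟨P.parts.card, partsCardPos hn P⟩ : ℕ+)) := by
  have hg : constantCoeff (serF g) = 0 := by
    rw [serF_eq_egf, constantCoeff_egf, valueSeq_zero]
  rw [← partitionSum_valueSeq f g hn,
    partitionSum_eq_factorial_mul_coeff_subst_egf (valueSeq_zero g), card_fin,
    ← serF_eq_egf, ← serF_eq_egf, compPS_eq_subst _ hg]

end FaaDiBruno

/-- For all algebra maps `f, g : F → k`, the composite exponential series satisfies
`f(g(x)) = (g ⋆ f)(x)`; equivalently, for every `n ≥ 1`, the coefficient of `x^n/n!` in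
`f(g(x))` is `Σ_{π ∈ Π_n} (Π_{B ∈ π} g(u_{|B|})) f(u_{ℓ(π)})`.  Hence the monoid of
algebra maps `F → k` under convolution is antiisomorphic to the monoid of exponential
formal power series with zero constant term under composition. -/
theorem faa_di_bruno_series_composition
    {k : Type*} [Field k] [CharZero k] (f g : FaaF k →ₐ[k] k) :
    compPS (serF f) (serF g) =
      (PowerSeries.mk fun n =>
        if h : 0 < n then convF g f (MvPolynomial.X ⟨n, h⟩) / n.factorial else 0) ∧
    (∀ (n : ℕ) (hn : 0 < n),
      (n.factorial : k) * PowerSeries.coeff n (compPS (serF f) (serF g)) =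
        ∑ P : Finpartition (Finset.univ : Finset (Fin n)),
          (∏ b ∈ P.parts.attach,
            g (MvPolynomial.X (⟨b.1.card, partCardPos P b.2⟩ : ℕ+))) *
          f (MvPolynomial.X (⟨P.parts.card, partsCardPos hn P⟩ : ℕ+))) := by
  refine ⟨?_, fun n hn => factorial_mul_coeff_compPS_serF f g hn⟩
  ext n
  rw [coeff_mk]
  split_ifs with hn
  · rw [eq_div_iff (Nat.cast_ne_zero.2 n.factorial_ne_zero), mul_comm,
      factorial_mul_coeff_compPS_serF f g hn]
    exact (convF_X g f ⟨n, hn⟩).symm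
  · simp [Nat.eq_zero_of_not_pos hn, compPS, serF]
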